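/- arXiv:1907.05296 — 3 statements merged into one kernel-verified Lean document; each statement's English description precedes it below -/
import Mathlib

section
/- Let L = (b_1, b_2, …, b_m) be a polyline in ℝ² and δ > 0. Suppose there are indices y, z with 1 ≤ y < z ≤ m such that the Fréchet distance between the single line segment (b_y, b_z) and the sub-polyline L[b_y, …, b_z] = (b_y, b_{y+1}, …, b_z) is at most δ. Then for all indices i, j with y ≤ i < j ≤ z, the Fréchet distance between the line segment (b_i, b_j) and the sub-polyline L[b_i, …, b_j] is at most 2δ. -/
/-!
Take a matching of the segment `(b_y, b_z)` with `L[b_y, …, b_z]` of width `d` close to `δ`, and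
let `t_i ≤ t_j` be times at which the polyline side passes the bends `b_i` and `b_j` (intermediate
value theorem). On `[t_i, t_j]` the segment side runs monotonically through a subsegment
`[m_i, m_j]` with `‖b_i - m_i‖, ‖b_j - m_j‖ ≤ d`. Replacing each point `lineMap m_i m_j λ` by
`lineMap b_i b_j λ` moves it by at most `d` (convexity of the ball), which yields a matching of
`(b_i, b_j)` with `L[b_i, …, b_j]` of width `2 d`.
-/

/-- Points of the Euclidean plane. -/
abbrev Pt := EuclideanSpace ℝ (Fin 2)

/-- The arc parametrization `c_L : [1, m] → ℝ²` of a polyline given by the list `L` of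
its `m` bend points (1-based indexing):
`c_L(x) = (⌊x⌋ + 1 − x)·b_⌊x⌋ + (x − ⌊x⌋)·b_⌈x⌉`. -/
noncomputable def arcParam (L : List Pt) (x : ℝ) : Pt :=
  ((⌊x⌋₊ : ℝ) + 1 - x) • L.getD (⌊x⌋₊ - 1) 0 + (x - (⌊x⌋₊ : ℝ)) • L.getD (⌈x⌉₊ - 1) 0

/-- The Fréchet distance between two polylines `L₁, L₂` (lists of points in the plane):
the infimum over continuous nondecreasing reparametrizations
`α : [0,1] → [1,|L₁|]`, `β : [0,1] → [1,|L₂|]` with `α(0) = β(0) = 1`, `α(1) = |L₁|`,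
`β(1) = |L₂|` of the maximal pointwise distance
`sup_{t ∈ [0,1]} ‖c_{L₁}(α(t)) − c_{L₂}(β(t))‖`. -/
noncomputable def frechetDist (L₁ L₂ : List Pt) : ℝ :=
  sInf { d : ℝ | ∃ α β : ℝ → ℝ,
    ContinuousOn α (Set.Icc 0 1) ∧ ContinuousOn β (Set.Icc 0 1) ∧
    MonotoneOn α (Set.Icc 0 1) ∧ MonotoneOn β (Set.Icc 0 1) ∧
    α 0 = 1 ∧ β 0 = 1 ∧ α 1 = L₁.length ∧ β 1 = L₂.length ∧
    d = sSup { e : ℝ | ∃ t ∈ Set.Icc (0 : ℝ) 1,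
          e = ‖arcParam L₁ (α t) - arcParam L₂ (β t)‖ } }

open Set AffineMap

lemma mapsTo_lineMap_Icc {s t : ℝ} (hs : s ∈ Icc (0 : ℝ) 1) (ht : t ∈ Icc (0 : ℝ) 1) :
    MapsTo (lineMap s t) (Icc (0 : ℝ) 1) (Icc 0 1) :=
  fun _ hu => (convex_Icc 0 1).lineMap_mem hs ht hu

structure IsReparam (f : ℝ → ℝ) (a b : ℝ) : Prop where
  continuousOn : ContinuousOn f (Icc 0 1)
  monotoneOn : MonotoneOn f (Icc 0 1)
  map_zero : f 0 = a
  map_one : f 1 = b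

lemma isReparam_lineMap {a b : ℝ} (hab : a ≤ b) : IsReparam (lineMap a b) a b :=
  ⟨lineMap_continuous.continuousOn, (lineMap_mono hab).monotoneOn _, by simp, by simp⟩

namespace IsReparam

variable {f : ℝ → ℝ} {a b : ℝ}

lemma mem_Icc (hf : IsReparam f a b) {t : ℝ} (ht : t ∈ Icc (0 : ℝ) 1) : f t ∈ Icc a b :=
  ⟨hf.map_zero ▸ hf.monotoneOn (left_mem_Icc.2 zero_le_one) ht ht.1,
    hf.map_one ▸ hf.monotoneOn ht (right_mem_Icc.2 zero_le_one) ht.2⟩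

lemma left_le_right (hf : IsReparam f a b) : a ≤ b :=
  nonempty_Icc.1 ⟨_, hf.mem_Icc (left_mem_Icc.2 zero_le_one)⟩

lemma add_const (hf : IsReparam f a b) (c : ℝ) : IsReparam (fun t => f t + c) (a + c) (b + c) :=
  ⟨hf.continuousOn.add continuousOn_const, fun _ hs _ ht hst => by
    simpa using hf.monotoneOn hs ht hst, by simp [hf.map_zero], by simp [hf.map_one]⟩

lemma restrict (hf : IsReparam f a b) {s t : ℝ} (hs : s ∈ Icc (0 : ℝ) 1) (ht : t ∈ Icc (0 : ℝ) 1)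
    (hst : s ≤ t) : IsReparam (fun u => f (lineMap s t u)) (f s) (f t) := by
  have hmaps := mapsTo_lineMap_Icc hs ht
  exact ⟨hf.continuousOn.comp lineMap_continuous.continuousOn hmaps,
    fun u hu v hv huv => hf.monotoneOn (hmaps hu) (hmaps hv) (lineMap_mono hst huv),
    by simp, by simp⟩

lemma exists_eq_of_lt (hf : IsReparam f a b) {u v : ℝ} (hu : a ≤ u) (huv : u < v) (hv : v ≤ b) :
    ∃ s ∈ Icc (0 : ℝ) 1, ∃ t ∈ Icc (0 : ℝ) 1, s ≤ t ∧ f s = u ∧ f t = v := by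
  have hivt := intermediate_value_Icc zero_le_one hf.continuousOn
  rw [hf.map_zero, hf.map_one] at hivt
  obtain ⟨s, hs, rfl⟩ := hivt ⟨hu, huv.le.trans hv⟩
  obtain ⟨t, ht, rfl⟩ := hivt ⟨hu.trans huv.le, hv⟩
  exact ⟨s, hs, t, ht, le_of_not_gt fun hts => huv.not_ge (hf.monotoneOn ht hs hts.le), rfl, rfl⟩

lemma exists_lineMap_weight (hf : IsReparam f a b) :
    ∃ w, IsReparam w 0 1 ∧ ∀ s ∈ Icc (0 : ℝ) 1, f s = lineMap a b (w s) := by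
  rcases hf.left_le_right.eq_or_lt with rfl | hab
  · exact ⟨lineMap 0 1, isReparam_lineMap zero_le_one, fun s hs => by
      simpa using le_antisymm (hf.mem_Icc hs).2 (hf.mem_Icc hs).1⟩
  · refine ⟨fun s => (f s - a) / (b - a), ⟨(hf.continuousOn.sub continuousOn_const).div_const _,
      fun s hs t ht hst => ?_, by simp [hf.map_zero], by simp [hf.map_one, (sub_pos.2 hab).ne']⟩,
      fun s _ => ?_⟩
    · exact div_le_div_of_nonneg_right (sub_le_sub_right (hf.monotoneOn hs ht hst) a)
        (sub_pos.2 hab).le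
    · rw [lineMap_apply_module', smul_eq_mul, div_mul_cancel₀ _ (sub_pos.2 hab).ne']
      ring

end IsReparam

lemma norm_lineMap_sub_le_two_mul {E : Type*} [SeminormedAddCommGroup E] [NormedSpace ℝ E]
    {p q m₁ m₂ x : E} {c d : ℝ} (hc : c ∈ Icc (0 : ℝ) 1) (h₁ : ‖p - m₁‖ ≤ d) (h₂ : ‖q - m₂‖ ≤ d)
    (hx : ‖lineMap m₁ m₂ c - x‖ ≤ d) : ‖lineMap p q c - x‖ ≤ 2 * d := by
  have hshift : ‖lineMap p q c - lineMap m₁ m₂ c‖ ≤ d := by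
    rw [← vsub_eq_sub, lineMap_vsub_lineMap, ← mem_closedBall_zero_iff]
    exact (convex_closedBall 0 d).lineMap_mem (mem_closedBall_zero_iff.2 h₁)
      (mem_closedBall_zero_iff.2 h₂) hc
  linarith [norm_sub_le_norm_sub_add_norm_sub (lineMap p q c) (lineMap m₁ m₂ c) x]

lemma norm_getD_le_sum {E : Type*} [SeminormedAddCommGroup E] (L : List E) (k : ℕ) :
    ‖L.getD k 0‖ ≤ (L.map (‖·‖)).sum := by
  have hsum : 0 ≤ (L.map (‖·‖)).sum := List.sum_nonneg (by simp)
  rw [List.getD_eq_getElem?_getD]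
  cases hk : L[k]? with
  | none => simpa using hsum
  | some p =>
    exact List.single_le_sum (by simp) _ (List.mem_map_of_mem (List.mem_of_getElem? hk))

lemma arcParam_eq_lineMap (L : List Pt) (x : ℝ) :
    arcParam L x = lineMap (L.getD (⌊x⌋₊ - 1) 0) (L.getD (⌈x⌉₊ - 1) 0) (x - ⌊x⌋₊) := by
  rw [arcParam, lineMap_apply_module]
  ring_nf

lemma norm_arcParam_le (L : List Pt) {x : ℝ} (hx : 0 ≤ x) :
    ‖arcParam L x‖ ≤ (L.map (‖·‖)).sum := by
  rw [arcParam_eq_lineMap, ← mem_closedBall_zero_iff]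
  refine (convex_closedBall 0 _).lineMap_mem ?_ ?_ ⟨sub_nonneg.2 (Nat.floor_le hx), ?_⟩
  · exact mem_closedBall_zero_iff.2 (norm_getD_le_sum L _)
  · exact mem_closedBall_zero_iff.2 (norm_getD_le_sum L _)
  · linarith [Nat.lt_floor_add_one x]

lemma arcParam_natCast (L : List Pt) (n : ℕ) : arcParam L n = L.getD (n - 1) 0 := by
  simp [arcParam]

lemma arcParam_of_mem_Icc (L : List Pt) (k : ℕ) {x : ℝ} (hx : x ∈ Icc (k : ℝ) (k + 1)) :
    arcParam L x = lineMap (L.getD (k - 1) 0) (L.getD k 0) (x - k) := by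
  rcases hx.2.eq_or_lt with rfl | hlt
  · simpa using arcParam_natCast L (k + 1)
  have hfloor : ⌊x⌋₊ = k := (Nat.floor_eq_iff (hx.1.trans' k.cast_nonneg)).2 ⟨hx.1, hlt⟩
  rcases hx.1.eq_or_lt with rfl | hgt
  · simp [arcParam_natCast]
  have hceil : ⌈x⌉₊ = k + 1 := by
    rw [Nat.ceil_eq_iff k.succ_ne_zero]
    push_cast
    exact ⟨by simpa using hgt, hlt.le⟩
  rw [arcParam_eq_lineMap, hfloor, hceil, Nat.add_sub_cancel]

lemma arcParam_pair (a b : Pt) {x : ℝ} (hx : x ∈ Icc (1 : ℝ) 2) :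
    arcParam [a, b] x = lineMap a b (x - 1) := by
  simpa using arcParam_of_mem_Icc [a, b] 1 (x := x) (by norm_num; exact hx)

lemma arcParam_take (L : List Pt) {c : ℕ} {x : ℝ} (hx : 1 ≤ x) (hxc : x ≤ c) :
    arcParam (L.take c) x = arcParam L x := by
  have hceil : ⌈x⌉₊ ≤ c := Nat.ceil_le.2 hxc
  have hpos : 0 < ⌈x⌉₊ := Nat.ceil_pos.2 (by linarith)
  have hfloor : ⌊x⌋₊ ≤ ⌈x⌉₊ := Nat.floor_le_ceil x
  simp only [arcParam, List.getD_eq_getElem?_getD, List.getElem?_take]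
  rw [if_pos (by omega), if_pos (by omega)]

lemma arcParam_drop (L : List Pt) (n : ℕ) {x : ℝ} (hx : 1 ≤ x) :
    arcParam (L.drop n) x = arcParam L (x + n) := by
  have hx₀ : 0 ≤ x := by linarith
  have hfloor : 1 ≤ ⌊x⌋₊ := Nat.one_le_floor_iff x |>.2 hx
  have hceil : 1 ≤ ⌈x⌉₊ := Nat.one_le_ceil_iff.2 (by linarith)
  simp only [arcParam, List.getD_eq_getElem?_getD, List.getElem?_drop,
    Nat.floor_add_natCast hx₀, Nat.ceil_add_natCast hx₀]
  rw [show n + (⌊x⌋₊ - 1) = ⌊x⌋₊ + n - 1 by omega, show n + (⌈x⌉₊ - 1) = ⌈x⌉₊ + n - 1 by omega]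
  push_cast
  ring_nf

lemma arcParam_take_drop (L : List Pt) (n : ℕ) {c : ℕ} {x : ℝ} (hx : 1 ≤ x) (hxc : x ≤ c) :
    arcParam ((L.drop n).take c) x = arcParam L (x + n) := by
  rw [arcParam_take _ hx hxc, arcParam_drop _ _ hx]

section Frechet

variable {L₁ L₂ : List Pt} {α β : ℝ → ℝ}

lemma bddAbove_norm_arcParam_sub {m₁ m₂ : ℝ} (hα : IsReparam α 1 m₁) (hβ : IsReparam β 1 m₂) :
    BddAbove {e : ℝ | ∃ t ∈ Icc (0 : ℝ) 1, e = ‖arcParam L₁ (α t) - arcParam L₂ (β t)‖} := by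
  refine ⟨(L₁.map (‖·‖)).sum + (L₂.map (‖·‖)).sum, ?_⟩
  rintro _ ⟨t, ht, rfl⟩
  exact (norm_sub_le _ _).trans (add_le_add
    (norm_arcParam_le L₁ (zero_le_one.trans (hα.mem_Icc ht).1))
    (norm_arcParam_le L₂ (zero_le_one.trans (hβ.mem_Icc ht).1)))

lemma frechetDist_le_of_forall_norm_le {D : ℝ} (hα : IsReparam α 1 L₁.length)
    (hβ : IsReparam β 1 L₂.length)
    (h : ∀ t ∈ Icc (0 : ℝ) 1, ‖arcParam L₁ (α t) - arcParam L₂ (β t)‖ ≤ D) :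
    frechetDist L₁ L₂ ≤ D := by
  rw [frechetDist]
  refine le_trans (csInf_le ⟨0, ?_⟩ ⟨α, β, hα.1, hβ.1, hα.2, hβ.2, hα.3, hβ.3, hα.4, hβ.4, rfl⟩) ?_
  · rintro _ ⟨_, _, -, -, -, -, -, -, -, -, rfl⟩
    exact Real.sSup_nonneg (by rintro _ ⟨t, -, rfl⟩; positivity)
  · exact csSup_le ⟨_, 0, left_mem_Icc.2 zero_le_one, rfl⟩ (by rintro _ ⟨t, ht, rfl⟩; exact h t ht)

lemma exists_isReparam_of_frechetDist_lt {D : ℝ} (h₁ : L₁ ≠ []) (h₂ : L₂ ≠ [])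
    (h : frechetDist L₁ L₂ < D) :
    ∃ α β : ℝ → ℝ, IsReparam α 1 L₁.length ∧ IsReparam β 1 L₂.length ∧
      ∀ t ∈ Icc (0 : ℝ) 1, ‖arcParam L₁ (α t) - arcParam L₂ (β t)‖ < D := by
  have hα₀ : IsReparam (lineMap 1 (L₁.length : ℝ)) 1 L₁.length :=
    isReparam_lineMap (Nat.one_le_cast.2 (List.length_pos_iff.2 h₁))
  have hβ₀ : IsReparam (lineMap 1 (L₂.length : ℝ)) 1 L₂.length :=
    isReparam_lineMap (Nat.one_le_cast.2 (List.length_pos_iff.2 h₂))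
  rw [frechetDist] at h
  obtain ⟨_, ⟨α, β, hαc, hβc, hαm, hβm, hα0, hβ0, hα1, hβ1, rfl⟩, hlt⟩ :=
    exists_lt_of_csInf_lt
      (by exact ⟨_, _, _, hα₀.1, hβ₀.1, hα₀.2, hβ₀.2, hα₀.3, hβ₀.3, hα₀.4, hβ₀.4, rfl⟩) h
  have hα : IsReparam α 1 L₁.length := ⟨hαc, hαm, hα0, hα1⟩
  have hβ : IsReparam β 1 L₂.length := ⟨hβc, hβm, hβ0, hβ1⟩
  exact ⟨α, β, hα, hβ, fun t ht =>
    (le_csSup (bddAbove_norm_arcParam_sub hα hβ) ⟨t, ht, rfl⟩).trans_lt hlt⟩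

end Frechet

lemma length_take_drop_sub (L : List Pt) {i j : ℕ} (hi : 1 ≤ i) (hij : i ≤ j) (hj : j ≤ L.length) :
    ((L.drop (i - 1)).take (j - i + 1)).length = j - i + 1 := by
  simp only [List.length_take, List.length_drop]
  omega

theorem frechetDist_le_two_mul_of_isReparam (L : List Pt) {i j : ℕ} (hi : 1 ≤ i) (hij : i ≤ j)
    (hj : j ≤ L.length) {a b : Pt} {α γ : ℝ → ℝ} {α₀ α₁ d : ℝ} (hα : IsReparam α α₀ α₁)
    (hγ : IsReparam γ i j) (h : ∀ t ∈ Icc (0 : ℝ) 1, ‖lineMap a b (α t) - arcParam L (γ t)‖ ≤ d) :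
    frechetDist [L.getD (i - 1) 0, L.getD (j - 1) 0] ((L.drop (i - 1)).take (j - i + 1)) ≤
      2 * d := by
  obtain ⟨w, hw, hαw⟩ := hα.exists_lineMap_weight
  have hw' : IsReparam (fun s => w s + 1) 1 ([L.getD (i - 1) 0, L.getD (j - 1) 0].length) := by
    simpa [one_add_one_eq_two] using hw.add_const 1
  have hγ' : IsReparam (fun s => γ s + -((i - 1 : ℕ) : ℝ)) 1
      ((L.drop (i - 1)).take (j - i + 1)).length := by
    convert hγ.add_const (-((i - 1 : ℕ) : ℝ)) using 1 <;>
      push_cast [length_take_drop_sub L hi hij hj, Nat.cast_sub hi, Nat.cast_sub hij] <;> ring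
  have hvertex : ∀ {k : ℕ} {t : ℝ}, t ∈ Icc (0 : ℝ) 1 → γ t = k →
      ‖L.getD (k - 1) 0 - lineMap a b (α t)‖ ≤ d := fun ht hk => by
    simpa [norm_sub_rev, hk, arcParam_natCast] using h _ ht
  refine frechetDist_le_of_forall_norm_le hw' hγ' fun s hs => ?_
  have hws := hw'.mem_Icc hs
  have hγs := hγ'.mem_Icc hs
  rw [length_take_drop_sub L hi hij hj] at hγs
  rw [arcParam_pair _ _ (by simpa using hws), arcParam_take_drop L _ hγs.1 hγs.2,
    add_sub_cancel_right, neg_add_cancel_right]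
  refine norm_lineMap_sub_le_two_mul (hw.mem_Icc hs)
    (hvertex (left_mem_Icc.2 zero_le_one) hγ.map_zero)
    (hvertex (right_mem_Icc.2 zero_le_one) hγ.map_one) ?_
  rw [← AffineMap.apply_lineMap, hα.map_zero, hα.map_one, ← hαw s hs]
  exact h s hs

theorem frechet_inner_bends_general (L : List Pt) (δ : ℝ) (y z : ℕ)
    (hy : 1 ≤ y) (hyz : y < z) (hz : z ≤ L.length)
    (h : frechetDist [L.getD (y - 1) 0, L.getD (z - 1) 0]
        ((L.drop (y - 1)).take (z - y + 1)) ≤ δ) :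
    ∀ i j : ℕ, y ≤ i → i < j → j ≤ z →
      frechetDist [L.getD (i - 1) 0, L.getD (j - 1) 0]
        ((L.drop (i - 1)).take (j - i + 1)) ≤ 2 * δ := by
  intro i j hyi hij hjz
  have hlen := length_take_drop_sub L hy hyz.le hz
  refine le_of_forall_pos_le_add fun ε hε => ?_
  obtain ⟨α, β, hα, hβ, hαβ⟩ := exists_isReparam_of_frechetDist_lt (List.cons_ne_nil _ _)
    (List.ne_nil_of_length_pos (by omega)) (h.trans_lt (lt_add_of_pos_right δ (half_pos hε)))
  -- the polyline side, read in the parameter of `L` instead of that of `L[b_y, …, b_z]`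
  have hγ : IsReparam (fun t => β t + ((y - 1 : ℕ) : ℝ)) y z := by
    convert hβ.add_const ((y - 1 : ℕ) : ℝ) using 1 <;>
      push_cast [hlen, Nat.cast_sub hy, Nat.cast_sub hyz.le] <;> ring
  have hseg : ∀ t ∈ Icc (0 : ℝ) 1, ‖lineMap (L.getD (y - 1) 0) (L.getD (z - 1) 0) (α t + -1) -
      arcParam L (β t + ((y - 1 : ℕ) : ℝ))‖ < δ + ε / 2 := fun t ht => by
    have hβt := hβ.mem_Icc ht
    rw [hlen] at hβt
    rw [← sub_eq_add_neg, ← arcParam_pair _ _ (by simpa using hα.mem_Icc ht),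
      ← arcParam_take_drop L _ hβt.1 hβt.2]
    exact hαβ t ht
  obtain ⟨ti, hti, tj, htj, htij, hγi, hγj⟩ :=
    hγ.exists_eq_of_lt (u := i) (v := j) (by exact_mod_cast hyi) (by exact_mod_cast hij)
      (by exact_mod_cast hjz)
  have := frechetDist_le_two_mul_of_isReparam L (hy.trans hyi) hij.le (hjz.trans hz)
    ((hα.add_const (-1)).restrict hti htj htij) (hγi ▸ hγj ▸ hγ.restrict hti htj htij)
    (fun s hs => (hseg _ (mapsTo_lineMap_Icc hti htj hs)).le)
  linarith

/-- Lemma 4.3 (innerBendsMaxDist2): if the line segment `(b_y, b_z)` is a valid shortcut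
of the polyline `L = (b_1, …, b_m)` with threshold `δ` (i.e. its Fréchet distance to the
sub-polyline `L[b_y, …, b_z]` is at most `δ`), then for all `y ≤ i < j ≤ z` the segment
`(b_i, b_j)` has Fréchet distance at most `2δ` to `L[b_i, …, b_j]`. -/
theorem frechet_inner_bends (L : List Pt) (δ : ℝ) (hδ : 0 < δ) (y z : ℕ)
    (hy : 1 ≤ y) (hyz : y < z) (hz : z ≤ L.length)
    (h : frechetDist [L.getD (y - 1) 0, L.getD (z - 1) 0]
        ((L.drop (y - 1)).take (z - y + 1)) ≤ δ) :
    ∀ i j : ℕ, y ≤ i → i < j → j ≤ z →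
      frechetDist [L.getD (i - 1) 0, L.getD (j - 1) 0]
        ((L.drop (i - 1)).take (j - i + 1)) ≤ 2 * δ :=
  frechet_inner_bends_general L δ y z hy hyz hz h
end

section
/- For all real numbers δ > 0 and r with r ≥ 3·δ, it holds that (16·δ·r)/√(64·δ² + 225·r²) ≥ (48/√2089)·δ, and moreover 48/√2089 > 1, so that (16·δ·r)/√(64·δ² + 225·r²) > δ. -/
/-- Appendix A: for `r ≥ 3δ` the distance `d₂ = 16δr/√(64δ² + 225r²)` is at least
`(48/√2089)·δ`, `48/√2089 > 1`, and hence `d₂ > δ`. -/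
theorem edge_gadget_d2_bound (δ r : ℝ) (hδ : 0 < δ) (hr : 3 * δ ≤ r) :
    16 * δ * r / Real.sqrt (64 * δ ^ 2 + 225 * r ^ 2) ≥ (48 / Real.sqrt 2089) * δ ∧
      48 / Real.sqrt 2089 > 1 ∧
      16 * δ * r / Real.sqrt (64 * δ ^ 2 + 225 * r ^ 2) > δ := by
  have hrpos : 0 < r := by linarith
  have hs2089 : (0:ℝ) < Real.sqrt 2089 := Real.sqrt_pos.2 (by norm_num)
  have hsq : Real.sqrt 2089 ^ 2 = 2089 := Real.sq_sqrt (by norm_num)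
  have hSpos : 0 < Real.sqrt (64 * δ ^ 2 + 225 * r ^ 2) :=
    Real.sqrt_pos.2 (by positivity)
  set S := Real.sqrt (64 * δ ^ 2 + 225 * r ^ 2) with hSdef
  have hS2 : S ^ 2 = 64 * δ ^ 2 + 225 * r ^ 2 := Real.sq_sqrt (by positivity)
  have hSle : S ≤ Real.sqrt 2089 * r / 3 := by
    have h9 : S ^ 2 ≤ (Real.sqrt 2089 * r / 3) ^ 2 := by
      rw [hS2]
      have : (Real.sqrt 2089 * r / 3) ^ 2 = 2089 * r ^ 2 / 9 := by
        field_simp; nlinarith [hsq]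
      rw [this]
      nlinarith
    have hpos : 0 ≤ Real.sqrt 2089 * r / 3 := by positivity
    nlinarith [hSpos.le]
  have h1 : 16 * δ * r / S ≥ (48 / Real.sqrt 2089) * δ := by
    rw [ge_iff_le, div_mul_eq_mul_div, div_le_div_iff₀ hs2089 hSpos]
    ring_nf
    nlinarith [mul_le_mul_of_nonneg_left hSle (by positivity : (0:ℝ) ≤ 48 * δ), hsq, hs2089]
  have h2 : 48 / Real.sqrt 2089 > 1 := by
    rw [gt_iff_lt, lt_div_iff₀ hs2089, one_mul]
    nlinarith [hsq, hs2089]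
  refine ⟨h1, h2, ?_⟩
  calc δ < (48 / Real.sqrt 2089) * δ := by nlinarith
    _ ≤ 16 * δ * r / S := h1
end

section
/- For every real δ > 0, every real r with r ≥ 3·δ, every integer i ≥ 2, and every real γ with 0 ≤ γ ≤ δ/5, it holds that √(r² + ((8/5)·δ)²) · sin( arctan(((8/5)·δ)/r) − arctan((δ + γ)/((2·i − 1)·r)) ) > δ. -/
/-- Appendix A, claim `d₃ > δ`: in the edge gadget, a potential shortcut from the second
bend to the `(2i+1)`-th bend has distance
`d₃ = √(r² + ((8/5)δ)²)·sin(arctan((8/5)δ/r) − arctan((δ+γ)/((2i−1)r))) > δ`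
whenever `r ≥ 3δ`, `i ≥ 2` and `0 ≤ γ ≤ δ/5`. -/
theorem edge_gadget_d3_gt (δ r : ℝ) (hδ : 0 < δ) (hr : 3 * δ ≤ r) (i : ℤ) (hi : 2 ≤ i)
    (γ : ℝ) (hγ0 : 0 ≤ γ) (hγ : γ ≤ δ / 5) :
    Real.sqrt (r ^ 2 + ((8 / 5) * δ) ^ 2) *
        Real.sin (Real.arctan (((8 / 5) * δ) / r)
          - Real.arctan ((δ + γ) / ((2 * (i : ℝ) - 1) * r))) > δ := by
  have hr0 : (0:ℝ) < r := lt_of_lt_of_le (by linarith) hr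
  have hi2 : (2:ℝ) ≤ (i:ℝ) := by exact_mod_cast hi
  set c : ℝ := (8/5) * δ with hc
  set m : ℝ := 2 * (i:ℝ) - 1 with hm
  have hm3 : (3:ℝ) ≤ m := by simp [hm]; linarith
  have hm0 : (0:ℝ) < m := by linarith
  set x : ℝ := (δ + γ) / (m * r) with hx
  have hx0 : 0 ≤ x := by positivity
  have hmr : 9 * δ ≤ m * r := by nlinarith
  have hxle : x ≤ 2/15 := by
    rw [hx, div_le_iff₀ (by positivity)]
    nlinarith
  rw [Real.sin_sub, Real.sin_arctan, Real.cos_arctan, Real.sin_arctan, Real.cos_arctan]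
  have h1 : Real.sqrt (1 + (c/r)^2) = Real.sqrt (r^2 + c^2) / r := by
    rw [show 1 + (c/r)^2 = (r^2 + c^2)/r^2 by field_simp,
      Real.sqrt_div (by positivity), Real.sqrt_sq hr0.le]
  rw [h1]
  have hT0 : 0 < Real.sqrt (r^2 + c^2) := Real.sqrt_pos.mpr (by positivity)
  have hS0 : 0 < Real.sqrt (1 + x^2) := Real.sqrt_pos.mpr (by positivity)
  have key : Real.sqrt (r^2 + c^2) *
      ((c/r) / (Real.sqrt (r^2 + c^2) / r) * (1 / Real.sqrt (1 + x^2))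
        - 1 / (Real.sqrt (r^2 + c^2) / r) * (x / Real.sqrt (1 + x^2)))
      = (c - r*x) / Real.sqrt (1 + x^2) := by
    field_simp
  rw [key]
  have hrx : r * x ≤ (2/5) * δ := by
    have : r * x = (δ + γ) / m := by rw [hx]; field_simp
    rw [this, div_le_iff₀ hm0]
    nlinarith
  have hS : Real.sqrt (1 + x^2) < 6/5 := by
    rw [show (6:ℝ)/5 = Real.sqrt ((6/5)^2) by rw [Real.sqrt_sq]; norm_num]
    apply Real.sqrt_lt_sqrt (by positivity)
    nlinarith
  rw [gt_iff_lt, lt_div_iff₀ hS0]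
  nlinarith [mul_lt_mul_of_pos_left hS hδ]
end
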